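/- arXiv:1108.2018 — 2 statements merged into one kernel-verified Lean document; each statement's English description precedes it below -/
import Mathlib

section
/- Let u be differentiable with u(0)=0, u > 0 and u' > 0 on (0,∞), and u(x) < x·u'(x) for all x > 0. Then the revenue R(v,s,c) = s + c·u(v-s)/u(c), for 0 < c < v - s, is strictly increasing in v, strictly decreasing in s, and strictly decreasing in c. -/
/-!
The revenue is `s + c · u(x) / u(c)` with `x = v - s > c`. The hypothesis `u(x) < x u'(x)` says
that the average slope `u(x) / x` is strictly increasing, so `c / u(c)` strictly decreases (monotonicity
in `c`) and `u'(x) > u(x) / x > u(c) / c` for `x > c`. The last inequality makes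
`x ↦ c u(x) / u(c) - x` strictly increasing on `[c, ∞)`, which is monotonicity in `s`; monotonicity
in `v` is just `u' > 0`.
-/

open Set

section AverageSlope

variable {u : ℝ → ℝ} (hu : DifferentiableOn ℝ u (Ioi 0))
  (hkey : ∀ x : ℝ, 0 < x → u x < x * deriv u x)
include hu

theorem hasDerivAt_of_differentiableOn_Ioi {x : ℝ} (hx : 0 < x) :
    HasDerivAt u (deriv u x) x :=
  (hu.differentiableAt (Ioi_mem_nhds hx)).hasDerivAt

include hkey

theorem strictMonoOn_div_self_of_lt_mul_deriv : StrictMonoOn (fun x => u x / x) (Ioi 0) := by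
  refine strictMonoOn_of_deriv_pos (convex_Ioi 0)
    (hu.continuousOn.div continuousOn_id fun x hx => (mem_Ioi.mp hx).ne') fun x hx => ?_
  rw [interior_Ioi] at hx
  have hx : 0 < x := hx
  have hd : HasDerivAt (fun x => u x / x) ((deriv u x * x - u x * 1) / x ^ 2) x :=
    (hasDerivAt_of_differentiableOn_Ioi hu hx).div (hasDerivAt_id' x) hx.ne'
  rw [hd.deriv]
  have := hkey x hx
  exact div_pos (by linarith) (by positivity)

theorem strictAntiOn_self_div_of_lt_mul_deriv (hpos : ∀ x : ℝ, 0 < x → 0 < u x) :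
    StrictAntiOn (fun x => x / u x) (Ioi 0) := by
  intro a ha b hb hab
  have hslope := strictMonoOn_div_self_of_lt_mul_deriv hu hkey ha hb hab
  have hpos_a : 0 < u a / a := div_pos (hpos a ha) ha
  simpa only [inv_div] using inv_strictAntiOn hpos_a (hpos_a.trans hslope) hslope

theorem div_self_lt_deriv_of_lt {c x : ℝ} (hc : 0 < c) (hcx : c < x) : u c / c < deriv u x := by
  have hx : 0 < x := hc.trans hcx
  calc u c / c < u x / x := strictMonoOn_div_self_of_lt_mul_deriv hu hkey hc hx hcx
    _ < deriv u x := (div_lt_iff₀ hx).mpr (by linarith [hkey x hx])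

theorem strictMonoOn_mul_div_sub_of_lt_mul_deriv (hpos : ∀ x : ℝ, 0 < x → 0 < u x) {c : ℝ}
    (hc : 0 < c) : StrictMonoOn (fun x => c * u x / u c - x) (Ici c) := by
  have huc := hpos c hc
  refine strictMonoOn_of_deriv_pos (convex_Ici c) ?_ fun x hx => ?_
  · exact ((continuousOn_const.mul (hu.continuousOn.mono fun x hx => hc.trans_le hx)).div_const
      _).sub continuousOn_id
  rw [interior_Ici] at hx
  have hcx : c < x := hx
  have hd : HasDerivAt (fun x => c * u x / u c - x) (c * deriv u x / u c - 1) x :=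
    (((hasDerivAt_of_differentiableOn_Ioi hu (hc.trans hcx)).const_mul c).div_const
      (u c)).sub (hasDerivAt_id' x)
  rw [hd.deriv, sub_pos, one_lt_div huc]
  have := div_self_lt_deriv_of_lt hu hkey hc hcx
  rw [div_lt_iff₀ hc] at this
  linarith

end AverageSlope

theorem revenue_monotonicity_general (u : ℝ → ℝ) (hdiff : Differentiable ℝ u)
    (hpos : ∀ x : ℝ, 0 < x → 0 < u x)
    (hdpos : ∀ x : ℝ, 0 < x → 0 < deriv u x)
    (hkey : ∀ x : ℝ, 0 < x → u x < x * deriv u x)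
    (R : ℝ → ℝ → ℝ → ℝ)
    (hR : ∀ v s c, R v s c = s + c * u (v - s) / u c) :
    (∀ c s v₁ v₂ : ℝ, 0 < c → c < v₁ - s → v₁ < v₂ → R v₁ s c < R v₂ s c) ∧
    (∀ c s₁ s₂ v : ℝ, 0 < c → c < v - s₂ → s₁ < s₂ → R v s₂ c < R v s₁ c) ∧
    (∀ c₁ c₂ s v : ℝ, 0 < c₁ → c₁ < c₂ → c₂ < v - s → R v s c₂ < R v s c₁) := by
  have hu : DifferentiableOn ℝ u (Ioi 0) := hdiff.differentiableOn
  simp only [hR]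
  refine ⟨fun c s v₁ v₂ hc hcv hv => ?_, fun c s₁ s₂ v hc hcv hs => ?_,
    fun c₁ c₂ s v hc₁ hc₁₂ hc₂v => ?_⟩
  · have hmono : StrictMonoOn u (Ioi 0) := strictMonoOn_of_deriv_pos (convex_Ioi 0)
      hu.continuousOn fun x hx => hdpos x (by rwa [interior_Ioi] at hx)
    have hlt : u (v₁ - s) < u (v₂ - s) :=
      hmono (mem_Ioi.mpr (by linarith)) (mem_Ioi.mpr (by linarith)) (by linarith)
    have : c * u (v₁ - s) / u c < c * u (v₂ - s) / u c := by gcongr; exact hpos c hc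
    linarith
  · have : c * u (v - s₂) / u c - (v - s₂) < c * u (v - s₁) / u c - (v - s₁) :=
      strictMonoOn_mul_div_sub_of_lt_mul_deriv hu hkey hpos hc (mem_Ici.mpr hcv.le)
        (mem_Ici.mpr (by linarith)) (by linarith)
    linarith
  · have hlt : c₂ / u c₂ < c₁ / u c₁ :=
      strictAntiOn_self_div_of_lt_mul_deriv hu hkey hpos hc₁ (hc₁.trans hc₁₂) hc₁₂
    rw [mul_div_right_comm, mul_div_right_comm c₁]
    exact add_lt_add_right (mul_lt_mul_of_pos_right hlt (hpos (v - s) (by linarith))) s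

theorem revenue_monotonicity (u : ℝ → ℝ) (hdiff : Differentiable ℝ u)
    (hu0 : u 0 = 0)
    (hpos : ∀ x : ℝ, 0 < x → 0 < u x)
    (hdpos : ∀ x : ℝ, 0 < x → 0 < deriv u x)
    (hkey : ∀ x : ℝ, 0 < x → u x < x * deriv u x)
    (R : ℝ → ℝ → ℝ → ℝ)
    (hR : ∀ v s c, R v s c = s + c * u (v - s) / u c) :
    (∀ c s v₁ v₂ : ℝ, 0 < c → c < v₁ - s → v₁ < v₂ → R v₁ s c < R v₂ s c) ∧
    (∀ c s₁ s₂ v : ℝ, 0 < c → c < v - s₂ → s₁ < s₂ → R v s₂ c < R v s₁ c) ∧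
    (∀ c₁ c₂ s v : ℝ, 0 < c₁ → c₁ < c₂ → c₂ < v - s → R v s c₂ < R v s c₁) :=
  revenue_monotonicity_general u hdiff hpos hdpos hkey R hR
end

section
/- For ρ₁ < ρ₂ < 0 and 0 < c < v - s, the revenue s + c·u_ρ(v-s)/u_ρ(c) with u_ρ(x) = (1-e^{-ρx})/ρ is strictly larger at ρ = ρ₁ than at ρ = ρ₂; i.e., the seller's revenue is strictly decreasing in the risk-loving coefficient ρ. -/
/-!
Writing `y = exp (-ρ c)` and `r = (v - s) / c > 1`, the ratio `u ρ (v - s) / u ρ c` equals the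
slope `(y ^ r - 1) / (y - 1)` of the chord of the strictly convex function `y ↦ y ^ r` through `1`.
Chord slopes of a strictly convex function increase with the moving endpoint, and `y` decreases
strictly in `ρ`, so the revenue decreases strictly in `ρ`.
-/

open Real Set

theorem rpow_chord_slope_lt {r x y : ℝ} (hr : 1 < r) (hx : 0 ≤ x) (hx1 : x ≠ 1) (hy1 : y ≠ 1)
    (hxy : x < y) : (x ^ r - 1) / (x - 1) < (y ^ r - 1) / (y - 1) := by
  simpa only [one_rpow] using
    (strictConvexOn_rpow hr).secant_strict_mono (mem_Ici.2 zero_le_one) hx (hx.trans hxy.le) hx1 hy1 hxy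

theorem exp_mul_rpow_div (k : ℝ) {a : ℝ} (ha : a ≠ 0) (b : ℝ) :
    exp (k * a) ^ (b / a) = exp (k * b) := by
  rw [← exp_mul, mul_assoc, mul_div_cancel₀ b ha]

noncomputable def expUtility (ρ x : ℝ) : ℝ := (1 - exp (-ρ * x)) / ρ

theorem expUtility_div_eq {ρ a : ℝ} (hρ : ρ ≠ 0) (ha : a ≠ 0) (b : ℝ) :
    expUtility ρ b / expUtility ρ a = (exp (-ρ * a) ^ (b / a) - 1) / (exp (-ρ * a) - 1) := by
  rw [exp_mul_rpow_div _ ha, expUtility, expUtility, div_div_div_cancel_right₀ hρ,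
    ← neg_sub, ← neg_sub (exp (-ρ * a)), neg_div_neg_eq]

theorem expUtility_div_strictAnti {ρ₁ ρ₂ a b : ℝ} (hρ₁ : ρ₁ ≠ 0) (hρ₂ : ρ₂ ≠ 0) (h12 : ρ₁ < ρ₂)
    (ha : 0 < a) (hab : a < b) :
    expUtility ρ₂ b / expUtility ρ₂ a < expUtility ρ₁ b / expUtility ρ₁ a := by
  have exp_ne_one {ρ : ℝ} (hρ : ρ ≠ 0) : exp (-ρ * a) ≠ 1 := by
    rw [Ne, exp_eq_one_iff]
    exact mul_ne_zero (neg_ne_zero.2 hρ) ha.ne'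
  rw [expUtility_div_eq hρ₁ ha.ne', expUtility_div_eq hρ₂ ha.ne']
  refine rpow_chord_slope_lt ((one_lt_div ha).2 hab) (exp_pos _).le (exp_ne_one hρ₂)
    (exp_ne_one hρ₁) ?_
  rw [exp_lt_exp]
  nlinarith

theorem revenue_decreasing_in_rho (ρ₁ ρ₂ : ℝ) (h12 : ρ₁ < ρ₂) (h2 : ρ₂ < 0)
    (c s v : ℝ) (hc : 0 < c) (hcv : c < v - s)
    (u : ℝ → ℝ → ℝ) (hu : ∀ ρ x, u ρ x = (1 - Real.exp (-ρ * x)) / ρ) :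
    s + c * u ρ₂ (v - s) / u ρ₂ c < s + c * u ρ₁ (v - s) / u ρ₁ c := by
  obtain rfl : u = expUtility := funext₂ hu
  have hratio := expUtility_div_strictAnti (h12.trans h2).ne h2.ne h12 hc hcv
  rw [mul_div_assoc, mul_div_assoc]
  gcongr
end
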